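/- Let T be an LTS in which every transition is labeled either by a nonempty finite sequence over an action set A or by ε. Let split(T) be the LTS obtained from T by replacing every transition s →⟨a1,…,an⟩ s' by a chain of transitions s →a1 u1 →a2 ⋯ u_{n-1} →an s' through fresh intermediate states, and replacing every transition s →ε s' by s →τ s'. Then a finite word w over A labels a τ-abstracted path of split(T) from its initial state if and only if w is a prefix of some concatenation ζ1 ⊕ ⋯ ⊕ ζk, where ⟨ζ1, …, ζk⟩ is the label sequence of a path of T from its initial state (a label ε contributing the empty sequence). In particular, the splitting operation does not change the trace semantics: the order of individual actions is preserved. -/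

import Mathlib

/-!
A word of `split T` read from an original state is a prefix of the flattened label sequence of
a path of `T`; from an intermediate state `(rest, t)` it is a prefix of `rest` followed by such a
flattening from `t`. This invariant, preserved backwards along every transition of `split T`,
gives one direction. Conversely, each transition of `T` is simulated by its chain in `split T`, so
a path of `T` yields the whole flattened word, and weak words of any LTS are closed under prefixes.
-/

/-- A labeled transition system over labels `L`. -/
structure LTS (L : Type) where
  S : Type
  init : S
  step : S → L → S → Prop

/-- `T.Path s w s'` : the finite word `w` labels a path of `T` from `s` to `s'`. -/
inductive LTS.Path {L : Type} (T : LTS L) : T.S → List L → T.S → Prop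
  | nil (s : T.S) : T.Path s [] s
  | cons {s : T.S} {a : L} {s' : T.S} {w : List L} {s'' : T.S} :
      T.step s a s' → T.Path s' w s'' → T.Path s (a :: w) s''

/-- `WeakPath T s w s'` : the word `w` is the sequence of non-τ labels along a
path from `s` to `s'` (labels `Option A`, with `none` playing the role of τ). -/
inductive WeakPath {A : Type} (T : LTS (Option A)) : T.S → List A → T.S → Prop
  | nil (s : T.S) : WeakPath T s [] s
  | tau {s s' : T.S} {w : List A} {s'' : T.S} :
      T.step s none s' → WeakPath T s' w s'' → WeakPath T s w s''
  | act {s : T.S} {a : A} {s' : T.S} {w : List A} {s'' : T.S} :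
      T.step s (some a) s' → WeakPath T s' w s'' → WeakPath T s (a :: w) s''

/-- Target of a chain step: if no sends remain we return to an original state,
otherwise we move to a fresh intermediate state. -/
def mkT {A : Type} {S : Type} (rest : List A) (t : S) : S ⊕ (List A × S) :=
  match rest with
  | [] => Sum.inl t
  | _ => Sum.inr (rest, t)

/-- The transitions of `split T`: a transition of `T` labeled `⟨a1, …, an⟩`
(`n ≥ 1`) is replaced by a chain of transitions labeled `a1, …, an` through
fresh intermediate states, and a transition labeled `ε` becomes a τ-transition. -/
inductive SplitStep {A : Type} (T : LTS (List A)) :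
    (T.S ⊕ (List A × T.S)) → Option A → (T.S ⊕ (List A × T.S)) → Prop
  | tauS {s s' : T.S} :
      T.step s [] s' → SplitStep T (Sum.inl s) none (Sum.inl s')
  | start {s : T.S} {a : A} {rest : List A} {s' : T.S} :
      T.step s (a :: rest) s' → SplitStep T (Sum.inl s) (some a) (mkT rest s')
  | cont {a : A} {rest : List A} {t : T.S} :
      SplitStep T (Sum.inr (a :: rest, t)) (some a) (mkT rest t)

/-- The splitting operation on an LTS whose labels are finite sequences over `A`
(the empty sequence playing the role of ε). -/
def split {A : Type} (T : LTS (List A)) : LTS (Option A) :=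
  ⟨T.S ⊕ (List A × T.S), Sum.inl T.init, SplitStep T⟩

namespace WeakPath

variable {B : Type} {U : LTS (Option B)}

theorem append {s u v : U.S} {w w' : List B} (h : WeakPath U s w u) (h' : WeakPath U u w' v) :
    WeakPath U s (w ++ w') v := by
  induction h with
  | nil => exact h'
  | tau hs _ ih => exact tau hs (ih h')
  | act hs _ ih => exact act hs (ih h')

theorem exists_of_prefix {s u : U.S} {w v : List B} (h : WeakPath U s w u) (hv : v <+: w) :
    ∃ u', WeakPath U s v u' := by
  induction h generalizing v with
  | nil s =>
    rw [List.prefix_nil.mp hv]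
    exact ⟨s, nil s⟩
  | tau hs _ ih =>
    obtain ⟨u', hu'⟩ := ih hv
    exact ⟨u', tau hs hu'⟩
  | @act s a _ _ _ hs _ ih =>
    rcases List.prefix_cons_iff.mp hv with rfl | ⟨v', rfl, hv'⟩
    · exact ⟨s, nil s⟩
    · obtain ⟨u', hu'⟩ := ih hv'
      exact ⟨u', act hs hu'⟩

end WeakPath

section Split

variable {A : Type} (T : LTS (List A))

def pending : T.S ⊕ (List A × T.S) → List A × T.S
  | Sum.inl s => ([], s)
  | Sum.inr p => p

@[simp]
theorem pending_mkT (rest : List A) (t : T.S) : pending T (mkT rest t) = (rest, t) := by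
  cases rest <;> rfl

theorem exists_path_of_weakPath_split {x u : (split T).S} {w : List A}
    (h : WeakPath (split T) x w u) :
    ∃ ζs s', T.Path (pending T x).2 ζs s' ∧ w <+: (pending T x).1 ++ ζs.flatten := by
  induction h with
  | nil x => exact ⟨[], _, .nil _, List.nil_prefix⟩
  | tau hs _ ih =>
    cases hs with
    | tauS hstep =>
      obtain ⟨ζs, s', hp, hw⟩ := ih
      exact ⟨[] :: ζs, s', .cons hstep hp, hw⟩
  | act hs _ ih =>
    cases hs with
    | start hstep =>
      obtain ⟨ζs, s', hp, hw⟩ := ih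
      simp only [pending_mkT] at hp hw
      exact ⟨_ :: ζs, s', .cons hstep hp, List.cons_prefix_cons.mpr ⟨rfl, hw⟩⟩
    | cont =>
      obtain ⟨ζs, s', hp, hw⟩ := ih
      simp only [pending_mkT] at hp hw
      exact ⟨ζs, s', hp, List.cons_prefix_cons.mpr ⟨rfl, hw⟩⟩

theorem weakPath_split_mkT (rest : List A) (t : T.S) :
    WeakPath (split T) (mkT rest t) rest (Sum.inl t) := by
  induction rest with
  | nil => exact .nil _
  | cons a rest ih => exact .act SplitStep.cont ih

theorem weakPath_split_of_step {s s' : T.S} {ζ : List A} (h : T.step s ζ s') :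
    WeakPath (split T) (Sum.inl s) ζ (Sum.inl s') := by
  cases ζ with
  | nil => exact .tau (SplitStep.tauS h) (.nil _)
  | cons a rest => exact .act (SplitStep.start h) (weakPath_split_mkT T rest s')

theorem weakPath_split_of_path {s s' : T.S} {ζs : List (List A)} (h : T.Path s ζs s') :
    WeakPath (split T) (Sum.inl s) ζs.flatten (Sum.inl s') := by
  induction h with
  | nil s => exact .nil _
  | cons hstep _ ih => exact (weakPath_split_of_step T hstep).append ih

end Split

/-- a finite word `w` over `A` labels a τ-abstracted path of
`split T` from its initial state iff `w` is a prefix of some concatenation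
`ζ1 ⊕ ⋯ ⊕ ζk` where `⟨ζ1, …, ζk⟩` is the label sequence of a path of `T` from
its initial state. -/
theorem split_weak_words {A : Type} (T : LTS (List A)) (w : List A) :
    (∃ t, WeakPath (split T) (split T).init w t) ↔
      (∃ (ζs : List (List A)) (s' : T.S), T.Path T.init ζs s' ∧ w <+: ζs.flatten) := by
  constructor
  · rintro ⟨t, h⟩
    exact exists_path_of_weakPath_split T h
  · rintro ⟨ζs, s', hp, hw⟩
    exact (weakPath_split_of_path T hp).exists_of_prefix hw
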